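/- The improper integral ∫_0^∞ exp(−2 ∫_0^u (1 − e^{−x})/x dx) du converges to a finite positive value (Rényi's parking constant), i.e., the monolayer 1D RSA density F(v) = ∫_0^v exp(−2 ∫_0^u (1 − e^{−x})/x dx) du is bounded above and tends to a finite limit as v → ∞. -/
import Mathlib


open MeasureTheory intervalIntegral Filter

/-- The continuously extended integrand (1 - e^{-x})/x, with value 1 at x = 0. -/
noncomputable def renyiIntegrand (x : ℝ) : ℝ :=
  if x = 0 then 1 else (1 - Real.exp (-x)) / x

/-- The Rényi monolayer RSA density function. -/
noncomputable def renyiF (v : ℝ) : ℝ :=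
  ∫ u in (0:ℝ)..v, Real.exp (-2 * ∫ x in (0:ℝ)..u, renyiIntegrand x)

lemma renyiIntegrand_continuous : Continuous renyiIntegrand := by
  rw [continuous_iff_continuousAt]
  intro x
  rcases eq_or_ne x 0 with rfl | hx
  · rw [← continuousWithinAt_compl_self]
    have h1 : Tendsto (fun y : ℝ => (Real.exp y - Real.exp 0) / (y - 0)) (nhdsWithin 0 {(0:ℝ)}ᶜ)
        (nhds (Real.exp 0)) := by
      have := Real.hasDerivAt_exp 0
      rw [hasDerivAt_iff_tendsto_slope] at this
      simpa [slope_fun_def_field] using this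
    have hneg : Tendsto (fun x : ℝ => -x) (nhdsWithin 0 {(0:ℝ)}ᶜ) (nhdsWithin 0 {(0:ℝ)}ᶜ) := by
      apply tendsto_nhdsWithin_of_tendsto_nhds_of_eventually_within
      · simpa using (continuous_neg.tendsto (0:ℝ)).mono_left nhdsWithin_le_nhds
      · filter_upwards [self_mem_nhdsWithin] with y hy
        simp only [Set.mem_compl_iff, Set.mem_singleton_iff] at hy ⊢
        exact neg_ne_zero.mpr hy
    have h2 := h1.comp hneg
    have heq : ∀ᶠ y in nhdsWithin (0:ℝ) {(0:ℝ)}ᶜ,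
        ((fun y : ℝ => (Real.exp y - Real.exp 0) / (y - 0)) ∘ (fun x : ℝ => -x)) y
          = renyiIntegrand y := by
      filter_upwards [self_mem_nhdsWithin] with y hy
      simp only [Set.mem_compl_iff, Set.mem_singleton_iff] at hy
      simp only [Function.comp, renyiIntegrand, if_neg hy, Real.exp_zero, sub_zero]
      rw [div_neg, ← neg_div, neg_sub]
    have h3 := h2.congr' heq
    have h0 : renyiIntegrand 0 = 1 := if_pos rfl
    unfold ContinuousWithinAt
    rw [h0]
    simpa using h3
  · have : ContinuousAt (fun x : ℝ => (1 - Real.exp (-x)) / x) x := by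
      fun_prop (disch := assumption)
    apply this.congr
    filter_upwards [isOpen_compl_singleton.mem_nhds hx] with y hy
    simp only [Set.mem_compl_iff, Set.mem_singleton_iff] at hy
    simp [renyiIntegrand, hy]

lemma renyiIntegrand_nonneg {x : ℝ} (hx : 0 ≤ x) : 0 ≤ renyiIntegrand x := by
  unfold renyiIntegrand
  split
  · norm_num
  · rename_i h
    have hx' : 0 < x := lt_of_le_of_ne hx (Ne.symm h)
    apply div_nonneg _ hx'.le
    have : Real.exp (-x) ≤ 1 := Real.exp_le_one_iff.mpr (by linarith)
    linarith

lemma renyiG_nonneg {u : ℝ} (hu : 0 ≤ u) : 0 ≤ ∫ x in (0:ℝ)..u, renyiIntegrand x :=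
  intervalIntegral.integral_nonneg hu (fun x hx => renyiIntegrand_nonneg hx.1)

lemma renyiG_lb {u : ℝ} (hu : 1 ≤ u) :
    (1 - Real.exp (-1)) * Real.log u ≤ ∫ x in (0:ℝ)..u, renyiIntegrand x := by
  set c : ℝ := 1 - Real.exp (-1) with hc
  have hII : ∀ a b : ℝ, IntervalIntegrable renyiIntegrand volume a b :=
    fun a b => renyiIntegrand_continuous.intervalIntegrable a b
  have hsplit : (∫ x in (0:ℝ)..1, renyiIntegrand x) + ∫ x in (1:ℝ)..u, renyiIntegrand x
      = ∫ x in (0:ℝ)..u, renyiIntegrand x :=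
    intervalIntegral.integral_add_adjacent_intervals (hII 0 1) (hII 1 u)
  have h1 : (0:ℝ) ≤ ∫ x in (0:ℝ)..1, renyiIntegrand x :=
    intervalIntegral.integral_nonneg zero_le_one (fun x hx => renyiIntegrand_nonneg hx.1)
  have h2 : ∫ x in (1:ℝ)..u, c * x⁻¹ ≤ ∫ x in (1:ℝ)..u, renyiIntegrand x := by
    apply intervalIntegral.integral_mono_on hu
    · exact (ContinuousOn.intervalIntegrable (by
        apply ContinuousOn.mul continuousOn_const
        apply ContinuousOn.inv₀ continuousOn_id
        intro x hx
        rw [Set.uIcc_of_le hu] at hx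
        exact ne_of_gt (lt_of_lt_of_le one_pos hx.1)))
    · exact hII 1 u
    · intro x hx
      have hx1 : 1 ≤ x := hx.1
      have hxpos : 0 < x := lt_of_lt_of_le one_pos hx1
      rw [renyiIntegrand, if_neg (ne_of_gt hxpos)]
      rw [div_eq_mul_inv]
      apply mul_le_mul_of_nonneg_right _ (inv_nonneg.mpr hxpos.le)
      have : Real.exp (-x) ≤ Real.exp (-1) := Real.exp_le_exp.mpr (by linarith)
      simp [hc]; linarith
  have h3 : ∫ x in (1:ℝ)..u, c * x⁻¹ = c * Real.log u := by
    rw [intervalIntegral.integral_const_mul, integral_inv_of_pos one_pos (by linarith : (0:ℝ) < u)]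
    simp
  clear_value c
  linarith [hsplit]

lemma renyi_outer_integrable :
    IntegrableOn (fun u : ℝ => Real.exp (-2 * ∫ x in (0:ℝ)..u, renyiIntegrand x))
      (Set.Ioi (0:ℝ)) volume := by
  set g : ℝ → ℝ := fun u => Real.exp (-2 * ∫ x in (0:ℝ)..u, renyiIntegrand x) with hg
  have hII : ∀ a b : ℝ, IntervalIntegrable renyiIntegrand volume a b :=
    fun a b => renyiIntegrand_continuous.intervalIntegrable a b
  have hgcont : Continuous g := by
    apply Real.continuous_exp.comp
    exact continuous_const.mul (intervalIntegral.continuous_primitive hII 0)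
  have hsplit : Set.Ioi (0:ℝ) = Set.Ioc (0:ℝ) 1 ∪ Set.Ioi 1 := by
    rw [Set.Ioc_union_Ioi_eq_Ioi]; norm_num
  rw [hsplit]
  apply IntegrableOn.union
  · exact hgcont.integrableOn_Ioc
  · set c : ℝ := 1 - Real.exp (-1) with hc
    have hcpos : (1:ℝ)/2 < c := by
      have h2e : (2:ℝ) < Real.exp 1 := by
        have := Real.exp_one_gt_d9
        linarith
      have : Real.exp (-1) < 1/2 := by
        rw [Real.exp_neg]
        rw [inv_lt_comm₀ (Real.exp_pos 1) (by norm_num)]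
        simpa using h2e
      simp only [hc]; linarith
    apply MeasureTheory.Integrable.mono' (g := fun u : ℝ => u ^ (-2*c))
      (integrableOn_Ioi_rpow_of_lt (by linarith) one_pos)
    · exact (hgcont.aestronglyMeasurable).restrict
    · filter_upwards [ae_restrict_mem measurableSet_Ioi] with u hu
      have hu1 : (1:ℝ) ≤ u := le_of_lt hu
      have hupos : (0:ℝ) < u := lt_of_lt_of_le one_pos hu1
      rw [Real.norm_eq_abs, abs_of_pos (Real.exp_pos _)]
      rw [Real.rpow_def_of_pos hupos]
      apply Real.exp_le_exp.mpr
      have hlb := renyiG_lb hu1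
      rw [hc] at *
      nlinarith [hlb]

/-- The improper integral defining Rényi's parking constant converges: the outer
integrand is integrable on (0, ∞), F is bounded above, and F tends to a finite
positive limit as v → ∞. -/
theorem stmt_2 :
    IntegrableOn (fun u : ℝ => Real.exp (-2 * ∫ x in (0:ℝ)..u, renyiIntegrand x))
      (Set.Ioi (0:ℝ)) volume ∧
    (∃ M : ℝ, ∀ v : ℝ, 0 ≤ v → renyiF v ≤ M) ∧
    ∃ L : ℝ, 0 < L ∧ Tendsto renyiF atTop (nhds L) := by
  set g : ℝ → ℝ := fun u => Real.exp (-2 * ∫ x in (0:ℝ)..u, renyiIntegrand x) with hg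
  have hint := renyi_outer_integrable
  have hgpos : ∀ u, 0 < g u := fun u => Real.exp_pos _
  set L : ℝ := ∫ u in Set.Ioi (0:ℝ), g u with hL
  have htend : Tendsto renyiF atTop (nhds L) := by
    have h := MeasureTheory.intervalIntegral_tendsto_integral_Ioi 0 hint tendsto_id
    exact h
  refine ⟨hint, ?_, L, ?_, htend⟩
  · refine ⟨L, fun v hv => ?_⟩
    have : renyiF v = ∫ u in Set.Ioc (0:ℝ) v, g u := by
      rw [renyiF, intervalIntegral.integral_of_le hv]
    rw [this, hL]
    apply setIntegral_mono_set hint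
    · exact Filter.Eventually.of_forall fun u => (hgpos u).le
    · exact HasSubset.Subset.eventuallyLE Set.Ioc_subset_Ioi_self
  · have h1 : renyiF 1 ≤ L := by
      have : renyiF 1 = ∫ u in Set.Ioc (0:ℝ) 1, g u := by
        rw [renyiF, intervalIntegral.integral_of_le zero_le_one]
      rw [this, hL]
      apply setIntegral_mono_set hint
      · exact Filter.Eventually.of_forall fun u => (hgpos u).le
      · exact HasSubset.Subset.eventuallyLE Set.Ioc_subset_Ioi_self
    have h2 : 0 < renyiF 1 := by
      rw [renyiF]
      apply intervalIntegral.intervalIntegral_pos_of_pos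
      · exact (Real.continuous_exp.comp (continuous_const.mul
          (intervalIntegral.continuous_primitive
            (fun a b => renyiIntegrand_continuous.intervalIntegrable a b) 0))).intervalIntegrable 0 1
      · exact fun x => Real.exp_pos _
      · exact one_pos
    linarith
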